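/- With hypotheses as above (χ = 1, 0 < w_j, Σ w_j = 1, each partial sum Σ_{j=1}^i w_j a non-integer in (0,1), and χ_i in the open interval (Σ_{j=1}^i w_j - Σ_{j=1}^{i-1} χ_j + 2(i-1), Σ_{j=1}^i w_j - Σ_{j=1}^{i-1} χ_j + 2i) for i ≤ N-1): for every t with 1 ≤ t ≤ N-1, the partial sum Σ_{j=1}^t χ_j is either 2t or 2t-1; in particular Σ_{j=1}^t χ_j ≤ 2t. -/

import Mathlib

open Finset

/-! Adding `Σ_{j < t} χ_j` to the `t`-th Teixidor i Bigas inequality gives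
`W_t + 2t - 2 < Σ_{j ≤ t} χ_j < W_t + 2t` with `W_t = Σ_{j ≤ t} w_j`. Positivity of the weights and
`W_N = 1` give `0 < W_t < 1`, so the integer `Σ_{j ≤ t} χ_j` lies strictly between `2t - 2` and
`2t + 1`. -/

theorem sum_Icc_one_eq_sum_Icc_pred_add {M : Type*} [AddCommMonoid M] (f : ℕ → M) {t : ℕ}
    (ht : 1 ≤ t) : ∑ j ∈ Icc 1 t, f j = ∑ j ∈ Icc 1 (t - 1), f j + f t := by
  obtain ⟨s, rfl⟩ := Nat.exists_eq_add_of_le' ht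
  simpa using Finset.sum_Icc_succ_top (Nat.le_add_left 1 s) f

theorem sum_Icc_one_pos_of_pos {K : Type*} [AddCommMonoid K] [PartialOrder K]
    [IsOrderedCancelAddMonoid K] {w : ℕ → K} {N t : ℕ} (hw : ∀ j ∈ Icc 1 N, 0 < w j)
    (ht : 1 ≤ t) (htN : t ≤ N) : 0 < ∑ j ∈ Icc 1 t, w j :=
  Finset.sum_pos (fun j hj => hw j (Icc_subset_Icc_right htN hj)) ⟨1, by simp [ht]⟩

theorem sum_Icc_one_lt_sum_of_pos {K : Type*} [AddCommMonoid K] [PartialOrder K]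
    [IsOrderedCancelAddMonoid K] {w : ℕ → K} {N t : ℕ} (hw : ∀ j ∈ Icc 1 N, 0 < w j)
    (htN : t < N) : ∑ j ∈ Icc 1 t, w j < ∑ j ∈ Icc 1 N, w j :=
  have hN : N ∈ Icc 1 N := by simp; omega
  Finset.sum_lt_sum_of_subset (Icc_subset_Icc_right htN.le) hN (by simp; omega) (hw N hN)
    (fun j hj _ => (hw j hj).le)

theorem Int.eq_or_eq_sub_one_of_lt_add_of_lt_add {m n : ℤ} {x : ℚ} (hx₀ : 0 < x) (hx₁ : x < 1)
    (hlo : x + n - 2 < m) (hhi : (m : ℚ) < x + n) : m = n ∨ m = n - 1 := by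
  have hlo' : ((n - 2 : ℤ) : ℚ) < m := by push_cast; linarith
  have hhi' : (m : ℚ) < ((n + 1 : ℤ) : ℚ) := by push_cast; linarith
  norm_cast at hlo' hhi'
  omega

theorem stmt_3_general (N : ℕ) (w : ℕ → ℚ) (hw : ∀ j ∈ Icc 1 N, 0 < w j)
    (hsum : ∑ j ∈ Icc 1 N, w j = 1)
    (c : ℕ → ℤ)
    (hineq : ∀ i ∈ Icc 1 (N - 1),
      (∑ j ∈ Icc 1 i, w j) - (∑ j ∈ Icc 1 (i - 1), (c j : ℚ)) + 2 * ((i : ℚ) - 1)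
          < (c i : ℚ) ∧
      (c i : ℚ) < (∑ j ∈ Icc 1 i, w j) - (∑ j ∈ Icc 1 (i - 1), (c j : ℚ)) + 2 * (i : ℚ)) :
    ∀ t, 1 ≤ t → t ≤ N - 1 →
      ((∑ j ∈ Icc 1 t, c j = 2 * (t : ℤ) ∨ ∑ j ∈ Icc 1 t, c j = 2 * (t : ℤ) - 1) ∧
        ∑ j ∈ Icc 1 t, c j ≤ 2 * (t : ℤ)) := by
  intro t ht1 ht2
  have htN : t < N := by omega
  obtain ⟨hlo, hhi⟩ := hineq t (mem_Icc.mpr ⟨ht1, ht2⟩)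
  have hW₀ := sum_Icc_one_pos_of_pos hw ht1 htN.le
  have hW₁ := hsum ▸ sum_Icc_one_lt_sum_of_pos hw htN
  have hS := sum_Icc_one_eq_sum_Icc_pred_add (fun j => (c j : ℚ)) ht1
  have hcases := Int.eq_or_eq_sub_one_of_lt_add_of_lt_add (m := ∑ j ∈ Icc 1 t, c j)
    (n := 2 * t) hW₀ hW₁ (by push_cast; linarith) (by push_cast; linarith)
  exact ⟨hcases, by omega⟩

/-- With χ = 1, positive weights summing to 1 with non-integral partial sums, and
the Teixidor i Bigas inequalities, each partial sum `Σ_{j=1}^t χ_j` (for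
`1 ≤ t ≤ N-1`) equals `2t` or `2t-1`; in particular it is at most `2t`. -/
theorem stmt_3 (N : ℕ) (hN : 2 ≤ N) (w : ℕ → ℚ) (hw : ∀ j ∈ Icc 1 N, 0 < w j)
    (hsum : ∑ j ∈ Icc 1 N, w j = 1)
    (hni : ∀ i ∈ Icc 1 (N - 1), ¬ ∃ m : ℤ, (∑ j ∈ Icc 1 i, w j) = (m : ℚ))
    (c : ℕ → ℤ)
    (hineq : ∀ i ∈ Icc 1 (N - 1),
      (∑ j ∈ Icc 1 i, w j) - (∑ j ∈ Icc 1 (i - 1), (c j : ℚ)) + 2 * ((i : ℚ) - 1)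
          < (c i : ℚ) ∧
      (c i : ℚ) < (∑ j ∈ Icc 1 i, w j) - (∑ j ∈ Icc 1 (i - 1), (c j : ℚ)) + 2 * (i : ℚ)) :
    ∀ t, 1 ≤ t → t ≤ N - 1 →
      ((∑ j ∈ Icc 1 t, c j = 2 * (t : ℤ) ∨ ∑ j ∈ Icc 1 t, c j = 2 * (t : ℤ) - 1) ∧
        ∑ j ∈ Icc 1 t, c j ≤ 2 * (t : ℤ)) :=
  stmt_3_general N w hw hsum c hineq
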